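/- Solutions of the Crank–Nicolson scheme conserve the discrete L² norm: if u^{n+1} = u^n + Δt·G(u^{n+1/2}) + Δt·ℍ(D₊D₋u^{n+1/2}) with u^{n+1/2} = (u^n + u^{n+1})/2, then ‖u^{n+1}‖ = ‖u^n‖. -/

import Mathlib

/-- Discrete Hilbert transform on ℤ. -/
noncomputable def Hdisc (u : ℤ → ℝ) (j : ℤ) : ℝ :=
  (1 / Real.pi) * ∑' k : ℤ, if k = j then 0
    else u k * (1 - (-1 : ℝ) ^ (j - k)) / ((j : ℝ) - (k : ℝ))

/-- Differences. -/
noncomputable def Dp (Δx : ℝ) (u : ℤ → ℝ) (j : ℤ) : ℝ := (u (j + 1) - u j) / Δx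
noncomputable def Dm (Δx : ℝ) (u : ℤ → ℝ) (j : ℤ) : ℝ := (u j - u (j - 1)) / Δx
noncomputable def Dsym (Δx : ℝ) (u : ℤ → ℝ) (j : ℤ) : ℝ := (u (j + 1) - u (j - 1)) / (2 * Δx)

/-- Discrete nonlinearity G(u)_j = ũ_j (Du)_j, ũ_j = (u_{j+1}+u_j+u_{j−1})/3. -/
noncomputable def Gnl (Δx : ℝ) (u : ℤ → ℝ) (j : ℤ) : ℝ :=
  (u (j + 1) + u j + u (j - 1)) / 3 * Dsym Δx u j

/-!
Multiplying the scheme by the midpoint `w = u^{n+1/2}` gives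
`‖u^{n+1}‖² - ‖u^n‖² = 2Δt (⟨w, G w⟩ + ⟨w, ℍ D₊D₋ w⟩)`. The first sum telescopes, since
`w_j G(w)_j` is a difference quotient of `w_j w_{j+1} (w_j + w_{j+1})`. For the second, `ℍ` is
skew-adjoint and commutes with the self-adjoint `D₊D₋`, so `⟨a, ℍ D₊D₋ a⟩ = 0` for finitely
supported `a`. To reach `w ∈ ℓ²` we truncate `w` to `[-N, N]`; the error is controlled because the
kernel `c_j = (1 - (-1)^j)/j` is orthogonal to all its shifts (`c_j c_{j+m} = (2/m)(c_j - c_{j+m})`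
telescopes), so `ℍ` is a multiple of an isometry on finitely supported sequences.
-/

open Filter Finset Topology Function Real

section SquareSummable

variable {ι : Type*} {f g : ι → ℝ}

lemma Summable.mul_of_sq (hf : Summable fun i => f i ^ 2) (hg : Summable fun i => g i ^ 2) :
    Summable fun i => f i * g i :=
  .of_norm_bounded ((hf.add hg).div_const 2) fun i => by
    rw [Real.norm_eq_abs, abs_mul]
    nlinarith [sq_nonneg (|f i| - |g i|), sq_abs (f i), sq_abs (g i)]

lemma Summable.sq_add (hf : Summable fun i => f i ^ 2) (hg : Summable fun i => g i ^ 2) :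
    Summable fun i => (f i + g i) ^ 2 :=
  .of_nonneg_of_le (fun _ => sq_nonneg _) (fun i => by nlinarith [sq_nonneg (f i - g i)])
    ((hf.add hg).mul_left 2)

lemma Summable.sq_const_mul (hf : Summable fun i => f i ^ 2) (a : ℝ) :
    Summable fun i => (a * f i) ^ 2 := by
  simpa only [mul_pow] using hf.mul_left (a ^ 2)

lemma sq_tsum_mul_le (hf : Summable fun i => f i ^ 2) (hg : Summable fun i => g i ^ 2) :
    (∑' i, f i * g i) ^ 2 ≤ (∑' i, f i ^ 2) * ∑' i, g i ^ 2 :=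
  le_of_tendsto_of_tendsto' ((hf.mul_of_sq hg).hasSum.pow 2) (Tendsto.mul hf.hasSum hg.hasSum)
    fun s => sum_mul_sq_le_sq_mul_sq s f g

lemma Summable.mul_of_abs_le (hf : Summable f) {M : ℝ} (hg : ∀ i, |g i| ≤ M) :
    Summable fun i => f i * g i :=
  .of_norm_bounded (hf.abs.mul_right M) fun i => by
    rw [Real.norm_eq_abs, abs_mul]
    exact mul_le_mul_of_nonneg_left (hg i) (abs_nonneg _)

lemma indicator_sq_le (s : Set ι) (f : ι → ℝ) (i : ι) : s.indicator f i ^ 2 ≤ f i ^ 2 := by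
  by_cases hi : i ∈ s
  · rw [Set.indicator_of_mem hi]
  · rw [Set.indicator_of_notMem hi, sq, zero_mul]
    exact sq_nonneg _

lemma Summable.indicator_sq (hf : Summable fun i => f i ^ 2) (s : Set ι) :
    Summable fun i => s.indicator f i ^ 2 :=
  .of_nonneg_of_le (fun _ => sq_nonneg _) (indicator_sq_le s f) hf

end SquareSummable

lemma Function.HasFiniteSupport.summable_sq {α : Type*} {a : α → ℝ} (ha : a.HasFiniteSupport) :
    Summable fun j => a j ^ 2 :=
  summable_of_hasFiniteSupport (ha.subset fun j hj => by simpa using hj)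

lemma tendsto_zero_of_tendsto_sq {α : Type*} {l : Filter α} {f : α → ℝ}
    (h : Tendsto (fun x => f x ^ 2) l (𝓝 0)) : Tendsto f l (𝓝 0) := by
  have h' := h.sqrt
  simp only [Real.sqrt_sq_eq_abs, Real.sqrt_zero] at h'
  exact (tendsto_zero_iff_abs_tendsto_zero f).mpr h'

lemma Summable.comp_add_int {f : ℤ → ℝ} (hf : Summable f) (n : ℤ) :
    Summable fun j => f (j + n) :=
  hf.comp_injective (add_left_injective n)

lemma Summable.comp_sub_int {f : ℤ → ℝ} (hf : Summable f) (n : ℤ) :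
    Summable fun j => f (j - n) := by
  simpa only [← sub_eq_add_neg] using hf.comp_add_int (-n)

lemma tsum_comp_add_int (f : ℤ → ℝ) (n : ℤ) : ∑' j, f (j + n) = ∑' j, f j :=
  (Equiv.addRight n).tsum_eq f

lemma tsum_comp_sub_int (f : ℤ → ℝ) (n : ℤ) : ∑' j, f (j - n) = ∑' j, f j :=
  (Equiv.subRight n).tsum_eq f

lemma sum_Ico_sub_comp_add (g : ℤ → ℝ) {a b m : ℤ} (hab : a ≤ b) (hm : 0 ≤ m) :
    ∑ j ∈ Ico a b, (g j - g (j + m)) = ∑ i ∈ Ico 0 m, (g (i + a) - g (i + b)) := by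
  have hconsec : ∀ x y z, x ≤ y → y ≤ z →
      ∑ j ∈ Ico x z, g j = ∑ j ∈ Ico x y, g j + ∑ j ∈ Ico y z, g j := fun x y z hxy hyz => by
    rw [← sum_union (Ico_disjoint_Ico_consecutive x y z), Ico_union_Ico_eq_Ico hxy hyz]
  have h₁ := hconsec a b (b + m) hab (by omega)
  have h₂ := hconsec a (a + m) (b + m) (by omega) (by omega)
  rw [sum_sub_distrib, sum_sub_distrib, sum_Ico_add', sum_Ico_add', sum_Ico_add', zero_add,
    zero_add, add_comm m a, add_comm m b]
  linarith

lemma tendsto_int_add_natCast_cofinite (i : ℤ) :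
    Tendsto (fun N : ℕ => i + (N : ℤ)) atTop cofinite :=
  Int.cofinite_eq ▸ (tendsto_atTop_add_const_left _ i tendsto_natCast_atTop_atTop).mono_right
    le_sup_right

lemma tendsto_int_add_neg_natCast_cofinite (i : ℤ) :
    Tendsto (fun N : ℕ => i + -(N : ℤ)) atTop cofinite :=
  Int.cofinite_eq ▸ (tendsto_atBot_add_const_left _ i
    (tendsto_neg_atTop_atBot.comp tendsto_natCast_atTop_atTop)).mono_right le_sup_left

lemma tsum_sub_comp_add_eq_zero {g : ℤ → ℝ} (hg : Tendsto g cofinite (𝓝 0)) (m : ℤ)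
    (hs : Summable fun j => g j - g (j + m)) : ∑' j, (g j - g (j + m)) = 0 := by
  wlog hm : 0 ≤ m generalizing m
  · have hs' : Summable fun j => g j - g (j + -m) :=
      (hs.comp_add_int (-m)).neg.congr fun j => by simp
    rw [← tsum_comp_add_int _ (-m), ← neg_eq_zero, ← tsum_neg, ← this (-m) hs' (by omega)]
    exact tsum_congr fun j => by simp
  have hlim : Tendsto (fun N : ℕ => ∑ j ∈ Ico (-N : ℤ) N, (g j - g (j + m))) atTop (𝓝 0) := by
    have h := tendsto_finsetSum (Ico 0 m) fun i _ =>
      (hg.comp (tendsto_int_add_neg_natCast_cofinite i)).sub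
        (hg.comp (tendsto_int_add_natCast_cofinite i))
    simp only [sub_zero, sum_const_zero] at h
    refine h.congr fun N => ?_
    rw [sum_Ico_sub_comp_add g (by omega) hm]
    rfl
  exact tendsto_nhds_unique (hs.hasSum.comp tendsto_Ico_neg) hlim

noncomputable def hilbertKernel (m : ℤ) : ℝ := if m = 0 then 0 else (1 - (-1 : ℝ) ^ m) / m

lemma hilbertKernel_of_even {m : ℤ} (hm : Even m) : hilbertKernel m = 0 := by
  simp [hilbertKernel, hm.neg_one_zpow]

lemma Int.cast_ne_zero_of_odd {m : ℤ} (hm : Odd m) : (m : ℝ) ≠ 0 :=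
  Int.cast_ne_zero.mpr (by rintro rfl; exact Int.not_odd_zero hm)

lemma hilbertKernel_of_odd {m : ℤ} (hm : Odd m) : hilbertKernel m = 2 / m := by
  rw [hilbertKernel, if_neg (Int.cast_ne_zero.mp (Int.cast_ne_zero_of_odd hm)), hm.neg_one_zpow]
  norm_num

lemma hilbertKernel_neg (m : ℤ) : hilbertKernel (-m) = -hilbertKernel m := by
  rcases Int.even_or_odd m with hm | hm
  · simp [hilbertKernel_of_even hm, hilbertKernel_of_even hm.neg]
  · rw [hilbertKernel_of_odd hm, hilbertKernel_of_odd hm.neg]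
    push_cast
    ring

lemma summable_hilbertKernel_sq : Summable fun m => hilbertKernel m ^ 2 := by
  refine .of_nonneg_of_le (fun _ => sq_nonneg _) (fun m => ?_)
    ((Real.summable_one_div_int_pow.mpr one_lt_two).mul_left 4)
  rcases Int.even_or_odd m with hm | hm
  · rw [hilbertKernel_of_even hm, zero_pow two_ne_zero]
    positivity
  · rw [hilbertKernel_of_odd hm, div_pow]
    norm_num [div_eq_mul_inv]

lemma summable_hilbertKernel_sub_sq (k : ℤ) : Summable fun j => hilbertKernel (j - k) ^ 2 :=
  summable_hilbertKernel_sq.comp_sub_int k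

lemma tendsto_hilbertKernel_cofinite : Tendsto hilbertKernel cofinite (𝓝 0) :=
  tendsto_zero_of_tendsto_sq summable_hilbertKernel_sq.tendsto_cofinite_zero

lemma Hdisc_eq_tsum (u : ℤ → ℝ) (j : ℤ) :
    Hdisc u j = π⁻¹ * ∑' k, u k * hilbertKernel (j - k) := by
  rw [Hdisc, one_div]
  congr 1
  refine tsum_congr fun k => ?_
  by_cases hk : k = j
  · simp [hk, hilbertKernel]
  · rw [if_neg hk, hilbertKernel, if_neg (sub_ne_zero.mpr (Ne.symm hk))]
    push_cast
    ring

lemma summable_mul_hilbertKernel {u : ℤ → ℝ} (hu : Summable fun k => u k ^ 2) (j : ℤ) :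
    Summable fun k => u k * hilbertKernel (j - k) :=
  hu.mul_of_sq (g := fun k => hilbertKernel (j - k))
    (summable_hilbertKernel_sq.comp_injective (sub_right_injective (b := j)))

lemma hilbertKernel_mul_comp_add_of_even {m : ℤ} (hm : Even m) (hm₀ : m ≠ 0) (j : ℤ) :
    hilbertKernel j * hilbertKernel (j + m) =
      2 / m * (hilbertKernel j - hilbertKernel (j + m)) := by
  rcases Int.even_or_odd j with hj | hj
  · simp [hilbertKernel_of_even hj, hilbertKernel_of_even (hj.add hm)]
  · have hjm := hj.add_even hm
    rw [hilbertKernel_of_odd hj, hilbertKernel_of_odd hjm]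
    have h₁ := Int.cast_ne_zero_of_odd hj
    have h₂ := Int.cast_ne_zero_of_odd hjm
    have h₃ : (m : ℝ) ≠ 0 := Int.cast_ne_zero.mpr hm₀
    push_cast at h₂ ⊢
    field_simp
    ring

lemma tsum_hilbertKernel_mul_comp_add {m : ℤ} (hm : m ≠ 0) :
    ∑' j, hilbertKernel j * hilbertKernel (j + m) = 0 := by
  rcases Int.even_or_odd m with he | ho
  · have hs : Summable fun j => hilbertKernel j - hilbertKernel (j + m) := by
      refine ((summable_hilbertKernel_sq.mul_of_sq
        (summable_hilbertKernel_sq.comp_add_int m)).mul_left ((m : ℝ) / 2)).congr fun j => ?_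
      have : (m : ℝ) ≠ 0 := Int.cast_ne_zero.mpr hm
      rw [hilbertKernel_mul_comp_add_of_even he hm j]
      field_simp
    rw [tsum_congr (hilbertKernel_mul_comp_add_of_even he hm), tsum_mul_left,
      tsum_sub_comp_add_eq_zero tendsto_hilbertKernel_cofinite m hs, mul_zero]
  · refine (tsum_congr fun j => ?_).trans tsum_zero
    rcases Int.even_or_odd j with hj | hj
    · rw [hilbertKernel_of_even hj, zero_mul]
    · rw [hilbertKernel_of_even (hj.add_odd ho), mul_zero]

lemma hasSum_hilbertKernel_mul (k k' : ℤ) :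
    HasSum (fun j => hilbertKernel (j - k) * hilbertKernel (j - k'))
      (if k = k' then ∑' m, hilbertKernel m ^ 2 else 0) := by
  rw [← (Equiv.addRight k).hasSum_iff]
  have hf : ((fun j => hilbertKernel (j - k) * hilbertKernel (j - k')) ∘ Equiv.addRight k) =
      fun j => hilbertKernel j * hilbertKernel (j + (k - k')) := by
    ext j
    simp only [comp_apply, Equiv.coe_addRight, add_sub_cancel_right]
    ring_nf
  rw [hf]
  convert (summable_hilbertKernel_sq.mul_of_sq
    (summable_hilbertKernel_sq.comp_add_int (k - k'))).hasSum using 1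
  split_ifs with h
  · simp [h, sq]
  · exact (tsum_hilbertKernel_mul_comp_add (sub_ne_zero.mpr h)).symm

section HilbertTransform

variable {u v : ℤ → ℝ}

lemma Hdisc_add (hu : Summable fun k => u k ^ 2) (hv : Summable fun k => v k ^ 2) (j : ℤ) :
    Hdisc (fun k => u k + v k) j = Hdisc u j + Hdisc v j := by
  simp only [Hdisc_eq_tsum, add_mul,
    (summable_mul_hilbertKernel hu j).tsum_add (summable_mul_hilbertKernel hv j)]
  ring

lemma Hdisc_const_mul (a : ℝ) (u : ℤ → ℝ) (j : ℤ) :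
    Hdisc (fun k => a * u k) j = a * Hdisc u j := by
  simp only [Hdisc_eq_tsum, mul_assoc, tsum_mul_left]
  ring

lemma Hdisc_comp_add (u : ℤ → ℝ) (n j : ℤ) :
    Hdisc (fun k => u (k + n)) j = Hdisc u (j + n) := by
  simp only [Hdisc_eq_tsum]
  rw [← tsum_comp_add_int (fun k => u k * hilbertKernel (j + n - k)) n]
  simp only [add_sub_add_right_eq_sub]

lemma tsum_mul_Hdisc_eq_neg {a : ℤ → ℝ} (ha : a.HasFiniteSupport)
    (hu : Summable fun j => u j ^ 2) :
    ∑' j, a j * Hdisc u j = -∑' j, Hdisc a j * u j := by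
  set s := ha.toFinset
  have hs : ∀ k ∉ s, a k = 0 := fun k hk => by_contra fun h => hk (ha.mem_toFinset.mpr h)
  have hreflect : ∀ k, ∑' j, u j * hilbertKernel (j - k) = -(π * Hdisc u k) := fun k => by
    rw [Hdisc_eq_tsum, ← mul_assoc, mul_inv_cancel₀ pi_ne_zero, one_mul, ← tsum_neg]
    exact tsum_congr fun j => by rw [← neg_sub, hilbertKernel_neg, mul_neg]
  calc ∑' j, a j * Hdisc u j = ∑ k ∈ s, a k * Hdisc u k :=
        tsum_eq_sum fun k hk => by rw [hs k hk, zero_mul]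
    _ = -∑ k ∈ s, ∑' j, π⁻¹ * a k * (u j * hilbertKernel (j - k)) := by
        rw [← sum_neg_distrib]
        refine sum_congr rfl fun k _ => ?_
        rw [tsum_mul_left, hreflect]
        field_simp
    _ = -∑' j, Hdisc a j * u j := by
        rw [← Summable.tsum_finsetSum fun k _ =>
          ((hu.mul_of_sq (summable_hilbertKernel_sub_sq k)).mul_left _)]
        congr 1
        refine tsum_congr fun j => ?_
        rw [Hdisc_eq_tsum, tsum_eq_sum fun k hk => by rw [hs k hk, zero_mul], mul_sum, sum_mul]
        exact sum_congr rfl fun k _ => by ring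

lemma hasSum_Hdisc_sq {a : ℤ → ℝ} (ha : a.HasFiniteSupport) :
    HasSum (fun j => Hdisc a j ^ 2) ((∑' m, hilbertKernel m ^ 2) / π ^ 2 * ∑' k, a k ^ 2) := by
  set s := ha.toFinset
  have hs : ∀ k ∉ s, a k = 0 := fun k hk => by_contra fun h => hk (ha.mem_toFinset.mpr h)
  have hsq : ∀ j, Hdisc a j ^ 2 = ∑ k ∈ s, ∑ k' ∈ s,
      π⁻¹ ^ 2 * a k * a k' * (hilbertKernel (j - k) * hilbertKernel (j - k')) := fun j => by
    rw [Hdisc_eq_tsum, tsum_eq_sum fun k hk => by rw [hs k hk, zero_mul], mul_pow, sq (∑ k ∈ s, _),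
      sum_mul_sum, mul_sum]
    refine sum_congr rfl fun k _ => ?_
    rw [mul_sum]
    exact sum_congr rfl fun k' _ => by ring
  have h := hasSum_sum fun k (_ : k ∈ s) => hasSum_sum fun k' (_ : k' ∈ s) =>
    (hasSum_hilbertKernel_mul k k').mul_left (π⁻¹ ^ 2 * a k * a k')
  simp only [mul_ite, mul_zero, sum_ite_eq, ← hsq] at h
  have hval : (∑' m, hilbertKernel m ^ 2) / π ^ 2 * ∑' k, a k ^ 2 =
      ∑ k ∈ s, if k ∈ s then π⁻¹ ^ 2 * a k * a k * ∑' m, hilbertKernel m ^ 2 else 0 := by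
    rw [tsum_eq_sum (f := fun k => a k ^ 2) fun k hk => by rw [hs k hk, sq, zero_mul], mul_sum]
    exact sum_congr rfl fun k hk => by rw [if_pos hk]; ring
  rwa [hval]

end HilbertTransform

section SecondDifference

def secondDiff (u : ℤ → ℝ) (j : ℤ) : ℝ := u (j + 1) - 2 * u j + u (j - 1)

variable {u : ℤ → ℝ}

lemma Dp_Dm_eq {Δx : ℝ} (hΔx : Δx ≠ 0) (u : ℤ → ℝ) :
    Dp Δx (Dm Δx u) = fun j => secondDiff u j / Δx ^ 2 := by
  ext j
  simp only [Dp, Dm, secondDiff, add_sub_cancel_right]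
  field_simp
  ring

lemma secondDiff_add (u v : ℤ → ℝ) (j : ℤ) :
    secondDiff (fun k => u k + v k) j = secondDiff u j + secondDiff v j := by
  simp only [secondDiff]
  ring

lemma secondDiff_sq_le (u : ℤ → ℝ) (j : ℤ) :
    secondDiff u j ^ 2 ≤ 3 * u (j + 1) ^ 2 + 12 * u j ^ 2 + 3 * u (j - 1) ^ 2 := by
  unfold secondDiff
  nlinarith [sq_nonneg (u (j + 1) + 2 * u j), sq_nonneg (u (j + 1) - u (j - 1)),
    sq_nonneg (2 * u j + u (j - 1))]

lemma summable_secondDiff_sq (hu : Summable fun j => u j ^ 2) :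
    Summable fun j => secondDiff u j ^ 2 :=
  .of_nonneg_of_le (fun _ => sq_nonneg _) (secondDiff_sq_le u)
    ((((hu.comp_add_int 1).mul_left 3).add (hu.mul_left 12)).add ((hu.comp_sub_int 1).mul_left 3))

lemma tsum_secondDiff_sq_le (hu : Summable fun j => u j ^ 2) :
    ∑' j, secondDiff u j ^ 2 ≤ 18 * ∑' j, u j ^ 2 := by
  have hnext := (hu.comp_add_int 1).mul_left 3
  have hmid := hu.mul_left 12
  have hprev := (hu.comp_sub_int 1).mul_left 3
  calc ∑' j, secondDiff u j ^ 2
      ≤ ∑' j, (3 * u (j + 1) ^ 2 + 12 * u j ^ 2 + 3 * u (j - 1) ^ 2) :=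
        (summable_secondDiff_sq hu).tsum_le_tsum (secondDiff_sq_le u) ((hnext.add hmid).add hprev)
    _ = 18 * ∑' j, u j ^ 2 := by
        rw [(hnext.add hmid).tsum_add hprev, hnext.tsum_add hmid, tsum_mul_left, tsum_mul_left,
          tsum_mul_left, tsum_comp_add_int (fun j => u j ^ 2), tsum_comp_sub_int (fun j => u j ^ 2)]
        ring

lemma Hdisc_secondDiff (hu : Summable fun j => u j ^ 2) (j : ℤ) :
    Hdisc (secondDiff u) j = secondDiff (Hdisc u) j := by
  have hnext : Summable fun k => u (k + 1) ^ 2 := hu.comp_add_int 1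
  have hmid : Summable fun k => (-2 * u k) ^ 2 := hu.sq_const_mul (-2)
  have hprev : Summable fun k => u (k + -1) ^ 2 := hu.comp_add_int (-1)
  have hD : secondDiff u = fun k => u (k + 1) + (-2 * u k + u (k + -1)) := by
    ext k
    simp only [secondDiff, ← sub_eq_add_neg]
    ring
  rw [hD, Hdisc_add hnext (hmid.sq_add hprev), Hdisc_add hmid hprev, Hdisc_const_mul,
    Hdisc_comp_add, Hdisc_comp_add, secondDiff, ← sub_eq_add_neg]
  ring

lemma Function.HasFiniteSupport.secondDiff {a : ℤ → ℝ} (ha : a.HasFiniteSupport) :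
    (secondDiff a).HasFiniteSupport := by
  have hnext := ha.fun_comp_of_injective (add_left_injective (1 : ℤ))
  have hprev := ha.fun_comp_of_injective (sub_left_injective (b := (1 : ℤ)))
  exact (hnext.sub (ha.mul_right fun _ => 2)).add hprev

lemma tsum_mul_secondDiff {a : ℤ → ℝ} (ha : a.HasFiniteSupport) (h : ℤ → ℝ) :
    ∑' j, a j * secondDiff h j = ∑' j, secondDiff a j * h j := by
  have hfin : ∀ b : ℤ → ℝ, b.HasFiniteSupport → Summable fun j => b j * h j :=
    fun b hb => summable_of_hasFiniteSupport (hb.mul_left h)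
  have hfin' : ∀ g : ℤ → ℝ, Summable fun j => a j * g j :=
    fun g => summable_of_hasFiniteSupport (ha.mul_left g)
  have expand : ∀ p q r : ℤ → ℝ, Summable p → Summable q → Summable r →
      ∑' j, (p j - 2 * q j + r j) = ∑' j, p j - 2 * ∑' j, q j + ∑' j, r j :=
    fun p q r hp hq hr => by
      rw [(hp.sub (hq.mul_left 2)).tsum_add hr, hp.tsum_sub (hq.mul_left 2), tsum_mul_left]
  have hshift₁ : ∑' j, a j * h (j + 1) = ∑' j, a (j - 1) * h j :=
    (tsum_comp_sub_int (fun j => a j * h (j + 1)) 1).symm.trans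
      (tsum_congr fun j => by rw [sub_add_cancel])
  have hshift₂ : ∑' j, a j * h (j - 1) = ∑' j, a (j + 1) * h j :=
    (tsum_comp_add_int (fun j => a j * h (j - 1)) 1).symm.trans
      (tsum_congr fun j => by rw [add_sub_cancel_right])
  calc ∑' j, a j * secondDiff h j
      = ∑' j, (a j * h (j + 1) - 2 * (a j * h j) + a j * h (j - 1)) :=
        tsum_congr fun j => by rw [secondDiff]; ring
    _ = ∑' j, (a (j - 1) * h j - 2 * (a j * h j) + a (j + 1) * h j) := by
        rw [expand _ _ _ (hfin' _) (hfin' h) (hfin' _),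
          expand _ _ _ (hfin _ (ha.fun_comp_of_injective (sub_left_injective (b := 1))))
            (hfin' h) (hfin _ (ha.fun_comp_of_injective (add_left_injective 1))),
          hshift₁, hshift₂]
    _ = ∑' j, secondDiff a j * h j := tsum_congr fun j => by rw [secondDiff]; ring

end SecondDifference

section Cancellation

variable {a u w : ℤ → ℝ}

lemma tsum_mul_Hdisc_secondDiff_eq_neg (ha : a.HasFiniteSupport)
    (hu : Summable fun j => u j ^ 2) :
    ∑' j, a j * Hdisc (secondDiff u) j = -∑' j, Hdisc (secondDiff a) j * u j := by
  simp_rw [Hdisc_secondDiff hu]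
  rw [tsum_mul_secondDiff ha, tsum_mul_Hdisc_eq_neg ha.secondDiff hu]

lemma tsum_mul_Hdisc_secondDiff_self (ha : a.HasFiniteSupport) :
    ∑' j, a j * Hdisc (secondDiff a) j = 0 := by
  have h := tsum_mul_Hdisc_secondDiff_eq_neg ha ha.summable_sq
  simp_rw [mul_comm (Hdisc _ _)] at h
  linarith

lemma tsum_Hdisc_secondDiff_sq_le (ha : a.HasFiniteSupport) :
    ∑' j, Hdisc (secondDiff a) j ^ 2 ≤
      18 * (∑' m, hilbertKernel m ^ 2) / π ^ 2 * ∑' j, a j ^ 2 := by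
  have hκ : 0 ≤ (∑' m, hilbertKernel m ^ 2) / π ^ 2 :=
    div_nonneg (tsum_nonneg fun _ => sq_nonneg _) (sq_nonneg _)
  rw [(hasSum_Hdisc_sq ha.secondDiff).tsum_eq]
  calc _ ≤ (∑' m, hilbertKernel m ^ 2) / π ^ 2 * (18 * ∑' j, a j ^ 2) :=
        mul_le_mul_of_nonneg_left (tsum_secondDiff_sq_le ha.summable_sq) hκ
    _ = _ := by ring

lemma sum_mul_Hdisc_secondDiff_eq (s : Finset ℤ) (hw : Summable fun j => w j ^ 2) :
    ∑ j ∈ s, w j * Hdisc (secondDiff w) j =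
      -∑' j, Hdisc (secondDiff ((s : Set ℤ).indicator w)) j * (s : Set ℤ)ᶜ.indicator w j := by
  have ha : ((s : Set ℤ).indicator w).HasFiniteSupport :=
    s.finite_toSet.subset Set.support_indicator_subset
  have hr := hw.indicator_sq (s : Set ℤ)ᶜ
  have hsplit : secondDiff w = fun j =>
      secondDiff ((s : Set ℤ).indicator w) j + secondDiff ((s : Set ℤ)ᶜ.indicator w) j := by
    conv_lhs => rw [← funext (Set.indicator_self_add_compl_apply (s : Set ℤ) w)]
    exact funext (secondDiff_add _ _)
  have hfin : ∀ g : ℤ → ℝ, Summable fun j => (s : Set ℤ).indicator w j * g j :=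
    fun g => summable_of_hasFiniteSupport (ha.mul_left g)
  calc ∑ j ∈ s, w j * Hdisc (secondDiff w) j
      = ∑' j, (s : Set ℤ).indicator w j * Hdisc (secondDiff w) j := by
        rw [tsum_eq_sum fun j hj => by rw [Set.indicator_of_notMem (by simpa using hj), zero_mul]]
        exact sum_congr rfl fun j hj => by rw [Set.indicator_of_mem (by simpa using hj)]
    _ = ∑' j, ((s : Set ℤ).indicator w j * Hdisc (secondDiff ((s : Set ℤ).indicator w)) j +
          (s : Set ℤ).indicator w j * Hdisc (secondDiff ((s : Set ℤ)ᶜ.indicator w)) j) := by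
        refine tsum_congr fun j => ?_
        rw [← mul_add, ← Hdisc_add (summable_secondDiff_sq ha.summable_sq)
          (summable_secondDiff_sq hr), ← hsplit]
    _ = _ := by
        rw [(hfin _).tsum_add (hfin _), tsum_mul_Hdisc_secondDiff_self ha,
          tsum_mul_Hdisc_secondDiff_eq_neg ha hr, zero_add]

lemma sq_sum_mul_Hdisc_secondDiff_le (s : Finset ℤ) (hw : Summable fun j => w j ^ 2) :
    (∑ j ∈ s, w j * Hdisc (secondDiff w) j) ^ 2 ≤
      18 * (∑' m, hilbertKernel m ^ 2) / π ^ 2 * (∑' j, w j ^ 2) *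
        ∑' j, (s : Set ℤ)ᶜ.indicator w j ^ 2 := by
  have ha : ((s : Set ℤ).indicator w).HasFiniteSupport :=
    s.finite_toSet.subset Set.support_indicator_subset
  have hr := hw.indicator_sq (s : Set ℤ)ᶜ
  rw [sum_mul_Hdisc_secondDiff_eq s hw, neg_sq]
  refine (sq_tsum_mul_le (hasSum_Hdisc_sq ha.secondDiff).summable hr).trans
    (mul_le_mul_of_nonneg_right ?_ (tsum_nonneg fun _ => sq_nonneg _))
  refine (tsum_Hdisc_secondDiff_sq_le ha).trans (mul_le_mul_of_nonneg_left ?_ ?_)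
  · exact ha.summable_sq.tsum_le_tsum (indicator_sq_le _ w) hw
  · exact div_nonneg (mul_nonneg (by norm_num) (tsum_nonneg fun _ => sq_nonneg _)) (sq_nonneg _)

lemma tsum_indicator_compl_sq (s : Finset ℤ) (hw : Summable fun j => w j ^ 2) :
    ∑' j, (s : Set ℤ)ᶜ.indicator w j ^ 2 = ∑' j, w j ^ 2 - ∑ j ∈ s, w j ^ 2 := by
  rw [← hw.sum_add_tsum_compl (s := s), add_sub_cancel_left,
    _root_.tsum_subtype _ fun j => w j ^ 2]
  refine tsum_congr fun j => ?_
  by_cases hj : j ∈ (s : Set ℤ)ᶜ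
  · rw [Set.indicator_of_mem hj, Set.indicator_of_mem hj]
  · rw [Set.indicator_of_notMem hj, Set.indicator_of_notMem hj, sq, zero_mul]

lemma tendsto_sum_Icc_mul_Hdisc_secondDiff (hw : Summable fun j => w j ^ 2) :
    Tendsto (fun N : ℕ => ∑ j ∈ Icc (-N : ℤ) N, w j * Hdisc (secondDiff w) j) atTop (𝓝 0) := by
  have htail : Tendsto (fun N : ℕ => ∑' j, (Icc (-N : ℤ) N : Set ℤ)ᶜ.indicator w j ^ 2) atTop
      (𝓝 0) := by
    simp_rw [tsum_indicator_compl_sq _ hw]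
    have h := (tendsto_const_nhds (x := ∑' j, w j ^ 2)).sub (hw.hasSum.comp tendsto_Icc_neg)
    rwa [sub_self] at h
  refine tendsto_zero_of_tendsto_sq (squeeze_zero (fun _ => sq_nonneg _)
    (fun N => sq_sum_mul_Hdisc_secondDiff_le _ hw) ?_)
  simpa using htail.const_mul _

end Cancellation

lemma hasSum_mul_Gnl {Δx : ℝ} (hΔx : Δx ≠ 0) {w : ℤ → ℝ} (hw : Summable fun j => w j ^ 2) :
    HasSum (fun j => w j * Gnl Δx w j) 0 := by
  set b : ℤ → ℝ := fun j => w j * w (j + 1) * (w j + w (j + 1))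
  have hwbdd : ∀ j, |w j| ≤ √(∑' i, w i ^ 2) := fun j =>
    Real.abs_le_sqrt (hw.le_tsum j fun _ _ => sq_nonneg _)
  have hb : Summable b := (hw.mul_of_sq (hw.comp_add_int 1)).mul_of_abs_le fun j =>
    (abs_add_le _ _).trans (add_le_add (hwbdd j) (hwbdd (j + 1)))
  have hterm : ∀ j, w j * Gnl Δx w j = (b j - b (j - 1)) / (6 * Δx) := fun j => by
    simp only [b, Gnl, Dsym, sub_add_cancel]
    field_simp
    ring
  simp_rw [hterm]
  have h := ((hb.sub (hb.comp_sub_int 1)).div_const (6 * Δx)).hasSum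
  rwa [tsum_div_const, hb.tsum_sub (hb.comp_sub_int 1), tsum_comp_sub_int, sub_self,
    zero_div] at h

theorem stmt_12 (Δx Δt : ℝ) (hΔx : 0 < Δx) (hΔt : 0 < Δt) (un unp1 : ℤ → ℝ)
    (hun : Summable (fun j => (un j) ^ 2)) (hunp1 : Summable (fun j => (unp1 j) ^ 2))
    (hscheme : ∀ j : ℤ,
      unp1 j = un j + Δt * Gnl Δx (fun i => (un i + unp1 i) / 2) j
        + Δt * Hdisc (Dp Δx (Dm Δx (fun i => (un i + unp1 i) / 2))) j) :
    Real.sqrt (Δx * ∑' j : ℤ, (unp1 j) ^ 2) = Real.sqrt (Δx * ∑' j : ℤ, (un j) ^ 2) := by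
  set w : ℤ → ℝ := fun i => (un i + unp1 i) / 2
  have hw : Summable fun j => w j ^ 2 :=
    ((hun.sq_add hunp1).div_const 4).congr fun j => by simp only [w]; ring
  have hH : ∀ j, Hdisc (Dp Δx (Dm Δx w)) j = Hdisc (secondDiff w) j / Δx ^ 2 := fun j => by
    simp_rw [Dp_Dm_eq hΔx.ne', div_eq_inv_mul]
    exact Hdisc_const_mul _ _ j
  have henergy : ∀ j, unp1 j ^ 2 - un j ^ 2 =
      2 * Δt * (w j * Gnl Δx w j + w j * Hdisc (secondDiff w) j / Δx ^ 2) := fun j => by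
    have h := hscheme j
    rw [hH] at h
    calc unp1 j ^ 2 - un j ^ 2 = (unp1 j - un j) * (2 * w j) := by simp only [w]; ring
      _ = _ := by rw [h]; ring
  have hG := hasSum_mul_Gnl hΔx.ne' hw
  have hHsum : Summable fun j => w j * Hdisc (secondDiff w) j :=
    ((((hunp1.sub hun).div_const (2 * Δt)).sub hG.summable).mul_left (Δx ^ 2)).congr fun j => by
      rw [henergy]
      field_simp
      ring
  have hH0 : HasSum (fun j => w j * Hdisc (secondDiff w) j) 0 := by
    have h := hHsum.hasSum
    rwa [tendsto_nhds_unique (h.comp tendsto_Icc_neg) (tendsto_sum_Icc_mul_Hdisc_secondDiff hw)]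
      at h
  have hdiff : HasSum (fun j => unp1 j ^ 2 - un j ^ 2) 0 := by
    simpa [henergy] using (hG.add (hH0.div_const (Δx ^ 2))).mul_left (2 * Δt)
  rw [sub_eq_zero.mp ((hunp1.hasSum.sub hun.hasSum).unique hdiff)]
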